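/- arXiv:0706.3752 — 2 statements merged into one kernel-verified Lean document; each statement's English description precedes it below -/
import Mathlib

section
/- Let a > 0 and set ε = 2·Q(a), where Q(x) = ∫_x^∞ φ(t) dt and φ(t) = (1/√(2π))·exp(−t²/2), so that 0 < ε < 1. Define f₁(z) = (φ(z−a) − φ(z+a))/(1−ε) for z ≥ 0 and f₁(z) = 0 for z < 0, and define f₀(z) = min(φ(z−a), φ(z+a))/ε for all z. Then: (i) f₁ and f₀ are nonnegative and each integrates to 1 over ℝ (i.e., they are probability density functions), and (ii) for every real z, (1−ε)·f₁(z) + ε·f₀(z) = φ(z−a). Consequently, transmitting over a binary erasure channel with erasure probability ε followed by the memoryless channel with conditional densities f₁, f₀ (and the mirror density f₋₁(z) = f₁(−z)) reproduces exactly the BI-AWGN conditional output density φ(z−a). -/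
/-- The standard Gaussian probability density function
`φ(t) = (1/√(2π)) · exp(−t²/2)`. -/
noncomputable def stdGaussPDF (t : ℝ) : ℝ :=
  (1 / Real.sqrt (2 * Real.pi)) * Real.exp (-t ^ 2 / 2)

/-- The Gaussian tail function `Q(x) = ∫_x^∞ φ(t) dt`. -/
noncomputable def gaussQ (x : ℝ) : ℝ :=
  ∫ t in Set.Ioi x, stdGaussPDF t

/-! For `a ≥ 0` the smaller of the two shifted densities at `z` is the one centred farther
from `z`, so `min (φ (z - a)) (φ (z + a)) = φ (|z| + a)`, and its integral is
`2 ∫_0^∞ φ (z + a) dz = 2 Q(a) = ε`.  Hence `φ(· - a) - min` has mass `1 - ε`, and it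
vanishes for `z < 0`: these two pieces, normalised, are `f₁` and `f₀`.  Finally
`0 < ε < 1` because `Q` is positive and strictly decreasing with `Q(0) = 1/2`. -/

open MeasureTheory Set ProbabilityTheory

theorem setIntegral_Ioi_comp_add_right {E : Type*} [NormedAddCommGroup E] [NormedSpace ℝ E]
    (f : ℝ → E) (c d : ℝ) : ∫ x in Ioi c, f (x + d) = ∫ x in Ioi (c + d), f x := by
  simpa only [preimage_add_const_Ioi, add_sub_cancel_right] using
    (measurePreserving_add_right volume d).setIntegral_preimage_emb
      (measurableEmbedding_addRight d) f (Ioi (c + d))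

theorem stdGaussPDF_eq_gaussianPDFReal : stdGaussPDF = gaussianPDFReal 0 1 := by
  ext t
  simp [stdGaussPDF, gaussianPDFReal]

theorem stdGaussPDF_pos (t : ℝ) : 0 < stdGaussPDF t := by
  rw [stdGaussPDF_eq_gaussianPDFReal]
  exact gaussianPDFReal_pos 0 1 t one_ne_zero

theorem integrable_stdGaussPDF : Integrable stdGaussPDF := by
  rw [stdGaussPDF_eq_gaussianPDFReal]
  exact integrable_gaussianPDFReal 0 1

theorem integral_stdGaussPDF : ∫ t, stdGaussPDF t = 1 := by
  rw [stdGaussPDF_eq_gaussianPDFReal]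
  exact integral_gaussianPDFReal_eq_one 0 one_ne_zero

theorem stdGaussPDF_neg (t : ℝ) : stdGaussPDF (-t) = stdGaussPDF t := by
  simp [stdGaussPDF]

theorem stdGaussPDF_le_of_sq_le {u v : ℝ} (h : u ^ 2 ≤ v ^ 2) :
    stdGaussPDF v ≤ stdGaussPDF u := by
  unfold stdGaussPDF
  gcongr

theorem gaussQ_add_gaussQ_neg (x : ℝ) : gaussQ x + gaussQ (-x) = 1 := by
  have hsymm : gaussQ x = ∫ t in Iic (-x), stdGaussPDF t := by
    simp_rw [gaussQ, ← integral_comp_neg_Ioi, stdGaussPDF_neg]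
  rw [hsymm, gaussQ, intervalIntegral.integral_Iic_add_Ioi integrable_stdGaussPDF.integrableOn
    integrable_stdGaussPDF.integrableOn, integral_stdGaussPDF]

theorem gaussQ_zero : gaussQ 0 = 1 / 2 := by
  have h := gaussQ_add_gaussQ_neg 0
  rw [neg_zero] at h
  linarith

theorem gaussQ_strictAnti : StrictAnti gaussQ := by
  intro x y hxy
  rw [← sub_pos, gaussQ, gaussQ, intervalIntegral.integral_Ioi_sub_Ioi
    integrable_stdGaussPDF.integrableOn hxy.le]
  exact intervalIntegral.intervalIntegral_pos_of_pos_on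
    integrable_stdGaussPDF.intervalIntegrable (fun t _ => stdGaussPDF_pos t) hxy

theorem gaussQ_pos (x : ℝ) : 0 < gaussQ x :=
  calc 0 ≤ gaussQ (x + 1) :=
        setIntegral_nonneg measurableSet_Ioi fun t _ => (stdGaussPDF_pos t).le
    _ < gaussQ x := gaussQ_strictAnti (lt_add_one x)

theorem gaussQ_lt_half {x : ℝ} (hx : 0 < x) : gaussQ x < 1 / 2 :=
  gaussQ_zero ▸ gaussQ_strictAnti hx

section Shifted

variable {a : ℝ}

theorem stdGaussPDF_add_le_sub {z : ℝ} (ha : 0 ≤ a) (hz : 0 ≤ z) :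
    stdGaussPDF (z + a) ≤ stdGaussPDF (z - a) :=
  stdGaussPDF_le_of_sq_le (by nlinarith)

theorem stdGaussPDF_sub_le_add {z : ℝ} (ha : 0 ≤ a) (hz : z ≤ 0) :
    stdGaussPDF (z - a) ≤ stdGaussPDF (z + a) :=
  stdGaussPDF_le_of_sq_le (by nlinarith)

theorem min_stdGaussPDF_sub_add (ha : 0 ≤ a) (z : ℝ) :
    min (stdGaussPDF (z - a)) (stdGaussPDF (z + a)) = stdGaussPDF (|z| + a) := by
  rcases le_total 0 z with hz | hz
  · rw [min_eq_right (stdGaussPDF_add_le_sub ha hz), abs_of_nonneg hz]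
  · rw [min_eq_left (stdGaussPDF_sub_le_add ha hz), abs_of_nonpos hz,
      ← stdGaussPDF_neg (z - a), neg_sub, neg_add_eq_sub]

theorem stdGaussPDF_sub_sub_min (ha : 0 ≤ a) (z : ℝ) :
    stdGaussPDF (z - a) - min (stdGaussPDF (z - a)) (stdGaussPDF (z + a)) =
      if 0 ≤ z then stdGaussPDF (z - a) - stdGaussPDF (z + a) else 0 := by
  split_ifs with hz
  · rw [min_eq_right (stdGaussPDF_add_le_sub ha hz)]
  · rw [min_eq_left (stdGaussPDF_sub_le_add ha (not_le.1 hz).le), sub_self]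

theorem integrable_min_stdGaussPDF (a : ℝ) :
    Integrable fun z => min (stdGaussPDF (z - a)) (stdGaussPDF (z + a)) :=
  (integrable_stdGaussPDF.comp_sub_right a).inf (integrable_stdGaussPDF.comp_add_right a)

theorem integral_min_stdGaussPDF (ha : 0 ≤ a) :
    ∫ z, min (stdGaussPDF (z - a)) (stdGaussPDF (z + a)) = 2 * gaussQ a := by
  simp_rw [min_stdGaussPDF_sub_add ha]
  rw [integral_comp_abs (f := fun x => stdGaussPDF (x + a)), setIntegral_Ioi_comp_add_right,
    zero_add, gaussQ]

end Shifted

/-- Let `a > 0` and set `ε = 2·Q(a)`, so that `0 < ε < 1`.  Define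
`f₁(z) = (φ(z−a) − φ(z+a))/(1−ε)` for `z ≥ 0` and `f₁(z) = 0` for `z < 0`, and
`f₀(z) = min(φ(z−a), φ(z+a))/ε` for all `z`.  Then `f₁` and `f₀` are nonnegative and each
integrates to `1` over `ℝ` (i.e., they are probability density functions), and for every
real `z`, `(1−ε)·f₁(z) + ε·f₀(z) = φ(z−a)`: the BI-AWGN conditional output density is
reproduced exactly by a binary erasure channel with erasure probability `ε` followed by
the channel with conditional densities `f₁, f₀`. -/
theorem gaussian_erasure_decomposition (a : ℝ) (ha : 0 < a)
    (ε : ℝ) (hε : ε = 2 * gaussQ a)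
    (f₁ f₀ : ℝ → ℝ)
    (hf₁ : ∀ z : ℝ, f₁ z =
      if 0 ≤ z then (stdGaussPDF (z - a) - stdGaussPDF (z + a)) / (1 - ε) else 0)
    (hf₀ : ∀ z : ℝ, f₀ z = min (stdGaussPDF (z - a)) (stdGaussPDF (z + a)) / ε) :
    (0 < ε ∧ ε < 1) ∧
    (∀ z : ℝ, 0 ≤ f₁ z) ∧ (∫ z : ℝ, f₁ z = 1) ∧
    (∀ z : ℝ, 0 ≤ f₀ z) ∧ (∫ z : ℝ, f₀ z = 1) ∧
    (∀ z : ℝ, (1 - ε) * f₁ z + ε * f₀ z = stdGaussPDF (z - a)) := by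
  have hε_pos : 0 < ε := hε ▸ by linarith [gaussQ_pos a]
  have hε_lt : ε < 1 := hε ▸ by linarith [gaussQ_lt_half ha]
  have hf₁' (z : ℝ) : f₁ z =
      (stdGaussPDF (z - a) - min (stdGaussPDF (z - a)) (stdGaussPDF (z + a))) / (1 - ε) := by
    rw [hf₁, stdGaussPDF_sub_sub_min ha.le, ite_div, zero_div]
  refine ⟨⟨hε_pos, hε_lt⟩, fun z => ?_, ?_, fun z => ?_, ?_, fun z => ?_⟩
  · rw [hf₁']
    exact div_nonneg (sub_nonneg.2 (min_le_left _ _)) (by linarith)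
  · simp_rw [hf₁']
    rw [integral_div, integral_sub (integrable_stdGaussPDF.comp_sub_right a)
      (integrable_min_stdGaussPDF a), integral_sub_right_eq_self, integral_stdGaussPDF,
      integral_min_stdGaussPDF ha.le, ← hε, div_self (by linarith)]
  · rw [hf₀]
    exact div_nonneg (le_min (stdGaussPDF_pos _).le (stdGaussPDF_pos _).le) hε_pos.le
  · simp_rw [hf₀]
    rw [integral_div, integral_min_stdGaussPDF ha.le, ← hε, div_self hε_pos.ne']
  · rw [hf₁', hf₀]
    field_simp [sub_ne_zero.2 hε_lt.ne', hε_pos.ne']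
    ring
end

section
/- For every real λ > 0, twice the Gaussian tail probability at √(2λ) is at most the secrecy capacity of the type II AWGN wiretap channel: 2·Q(√(2λ)) ≤ (1/√π) ∫_ℝ exp(−(y−√λ)²) · log₂(1 + exp(−4y√λ)) dy, where Q(x) = ∫_x^∞ (1/√(2π))·exp(−t²/2) dt. Equivalently, the gap Δ = 1 − C_BI-AWGN(λ) − 2·Q(√(2λ)) is nonnegative, where C_BI-AWGN(λ) = 1 − (1/√π) ∫_ℝ exp(−(y−√λ)²) · log₂(1 + exp(−4y√λ)) dy. -/
open MeasureTheory Set Real Filter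

lemma min_one_le_logb_two_one_add {u : ℝ} (hu : 0 ≤ u) : min 1 u ≤ logb 2 (1 + u) := by
  rcases le_total u 1 with hu1 | hu1
  · rw [min_eq_right hu1, le_logb_iff_rpow_le one_lt_two (by linarith)]
    simpa [one_add_one_eq_two, mul_one] using
      rpow_one_add_le_one_add_mul_self (s := 1) (by norm_num) hu hu1
  · rw [min_eq_left hu1, le_logb_iff_rpow_le one_lt_two (by linarith), rpow_one]
    linarith

lemma logb_one_add_le {b u : ℝ} (hb : 1 < b) (hu : -1 < u) : logb b (1 + u) ≤ u / log b := by
  rw [logb]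
  have hlogb := log_pos hb
  gcongr
  linarith [log_le_sub_one_of_pos (show 0 < 1 + u by linarith)]

lemma exp_neg_sq_abs_add_le {s : ℝ} (hs : 0 ≤ s) (y : ℝ) :
    exp (-(|y| + s) ^ 2) ≤ exp (-(y - s) ^ 2) * logb 2 (1 + exp (-4 * y * s)) := by
  have hmin : exp (-(|y| + s) ^ 2) = exp (-(y - s) ^ 2) * min 1 (exp (-4 * y * s)) := by
    rcases le_total y 0 with hy | hy
    · rw [abs_of_nonpos hy, min_eq_left (one_le_exp (by nlinarith)), mul_one]
      ring_nf
    · rw [abs_of_nonneg hy, min_eq_right (exp_le_one_iff.2 (by nlinarith)), ← exp_add]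
      ring_nf
  rw [hmin]
  exact mul_le_mul_of_nonneg_left (min_one_le_logb_two_one_add (exp_nonneg _)) (exp_nonneg _)

lemma integrable_exp_neg_sq_sub_mul_logb (s : ℝ) :
    Integrable fun y => exp (-(y - s) ^ 2) * logb 2 (1 + exp (-4 * y * s)) := by
  have hdom : Integrable fun y => exp (-(y + s) ^ 2) / log 2 := by
    simpa using ((integrable_exp_neg_mul_sq one_pos).comp_add_right s).div_const (log 2)
  have hcont : Continuous fun y => exp (-(y - s) ^ 2) * logb 2 (1 + exp (-4 * y * s)) := by
    refine (by fun_prop : Continuous _).mul (Continuous.logb (by fun_prop) fun y => ?_)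
    positivity
  refine hdom.mono' hcont.aestronglyMeasurable (Eventually.of_forall fun y => ?_)
  have hlogb : 0 ≤ logb 2 (1 + exp (-4 * y * s)) :=
    logb_nonneg one_lt_two (by linarith [exp_nonneg (-4 * y * s)])
  rw [norm_of_nonneg (mul_nonneg (exp_nonneg _) hlogb)]
  calc exp (-(y - s) ^ 2) * logb 2 (1 + exp (-4 * y * s))
      ≤ exp (-(y - s) ^ 2) * (exp (-4 * y * s) / log 2) :=
        mul_le_mul_of_nonneg_left (logb_one_add_le one_lt_two (by linarith [exp_pos (-4 * y * s)]))
          (exp_nonneg _)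
    _ = exp (-(y + s) ^ 2) / log 2 := by rw [mul_div_assoc', ← exp_add]; ring_nf

lemma integral_exp_neg_sq_abs_add (s : ℝ) :
    ∫ y, exp (-(|y| + s) ^ 2) = 2 * ∫ t in Ioi s, exp (-t ^ 2) := by
  rw [integral_comp_abs (f := fun y => exp (-(y + s) ^ 2))]
  congr 1
  simpa using (measurePreserving_add_right volume s).setIntegral_preimage_emb
    (measurableEmbedding_addRight s) (fun t => exp (-t ^ 2)) (Ioi s)

lemma gaussQ_sqrt_two_mul (x : ℝ) : gaussQ (√2 * x) = 1 / √π * ∫ t in Ioi x, exp (-t ^ 2) := by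
  have hsub : ∀ t, stdGaussPDF (√2 * t) = 1 / √(2 * π) * exp (-t ^ 2) := fun t => by
    rw [stdGaussPDF, mul_pow, sq_sqrt zero_le_two]
    ring_nf
  rw [gaussQ, ← integral_comp_mul_left_Ioi' _ _ (sqrt_pos.2 zero_lt_two)]
  simp only [hsub, integral_const_mul, smul_eq_mul, sqrt_mul zero_le_two]
  field_simp

theorem twoQ_le_secrecy_capacity_general (lam : ℝ) :
    2 * gaussQ (Real.sqrt (2 * lam)) ≤
      (1 / Real.sqrt Real.pi) *
        ∫ y : ℝ, Real.exp (-(y - Real.sqrt lam) ^ 2) *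
          Real.logb 2 (1 + Real.exp (-4 * y * Real.sqrt lam)) := by
  rw [sqrt_mul zero_le_two, gaussQ_sqrt_two_mul, mul_left_comm,
    ← integral_exp_neg_sq_abs_add]
  refine mul_le_mul_of_nonneg_left ?_ (by positivity)
  exact integral_mono_of_nonneg (Eventually.of_forall fun y => (exp_pos _).le)
    (integrable_exp_neg_sq_sub_mul_logb _)
    (Eventually.of_forall (exp_neg_sq_abs_add_le (sqrt_nonneg lam)))

/-- For every real `λ > 0`, twice the Gaussian tail probability at `√(2λ)` is at most the
secrecy capacity of the type II AWGN wiretap channel: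
`2·Q(√(2λ)) ≤ (1/√π) ∫ exp(−(y−√λ)²) · log₂(1 + exp(−4y√λ)) dy`.
Equivalently, the gap `Δ = 1 − C_BI-AWGN(λ) − 2·Q(√(2λ))` is nonnegative, where
`C_BI-AWGN(λ) = 1 − (1/√π) ∫ exp(−(y−√λ)²) · log₂(1 + exp(−4y√λ)) dy`. -/
theorem twoQ_le_secrecy_capacity (lam : ℝ) (hlam : 0 < lam) :
    2 * gaussQ (Real.sqrt (2 * lam)) ≤
      (1 / Real.sqrt Real.pi) *
        ∫ y : ℝ, Real.exp (-(y - Real.sqrt lam) ^ 2) *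
          Real.logb 2 (1 + Real.exp (-4 * y * Real.sqrt lam)) :=
  twoQ_le_secrecy_capacity_general lam
end
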